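/- arXiv:1507.08734 — 2 statements merged into one kernel-verified Lean document; each statement's English description precedes it below -/
import Mathlib

section
/- For a binary tree t on n ≥ 3 leaves, the Pauplin coefficients c_{xy}(t) = 2^{-l(x,y)}, where l(x,y) is the number of internal (degree-3) nodes on the path from leaf x to leaf y, satisfy: for every leaf x, the sum over all other leaves y of c_{xy}(t) equals 1. -/
/-- An unrooted binary phylogenetic tree with leaf set `Fin n`: a finite tree
whose leaves (degree-1 vertices) are exactly the images of the labels and whose
remaining (internal) vertices have degree 3. -/
structure PhyloTree (n : ℕ) where
  V : Type
  [instFintype : Fintype V]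
  [instDecEq : DecidableEq V]
  G : SimpleGraph V
  [instDecAdj : DecidableRel G.Adj]
  isTree : G.IsTree
  leaf : Fin n ↪ V
  degree_leaf : ∀ i, G.degree (leaf i) = 1
  degree_internal : ∀ v : V, (∀ i, leaf i ≠ v) → G.degree v = 3

attribute [instance] PhyloTree.instFintype PhyloTree.instDecEq PhyloTree.instDecAdj

/-- `l(x,y)`: the number of internal (non-leaf, i.e. degree-3) vertices on the
unique path between leaves `x` and `y`. -/
noncomputable def PhyloTree.internalCount {n : ℕ} (t : PhyloTree n) (x y : Fin n) : ℕ :=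
  ((t.isTree.existsUnique_path (t.leaf x) (t.leaf y)).choose.support.filter
    (fun v => ∀ i, t.leaf i ≠ v)).length

/-! Root the tree at the leaf `x`. Below any vertex `v ≠ x`, the leaves `w` satisfy
`∑ 2^{-d(x,w)} = 2^{-d(x,v)}`: a leaf contributes itself, and an internal vertex has exactly two
children, each carrying half of its weight (Kraft's equality for a full binary tree). At the
unique neighbour of `x`, whose subtree holds every other leaf, this gives `∑ 2^{-d(x,y)} = 1/2`,
and `l(x,y) = d(x,y) - 1`. -/

open Finset

namespace SimpleGraph

variable {V : Type*} {G : SimpleGraph V} {r u v w : V}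

lemma Connected.exists_adj_dist_add_one_eq (hG : G.Connected) (hv : v ≠ r) :
    ∃ u, G.Adj v u ∧ G.dist r u + 1 = G.dist r v := by
  obtain ⟨p, hp⟩ := hG.exists_walk_length_eq_dist v r
  have hnil : ¬p.Nil := p.not_nil_of_ne hv
  refine ⟨p.snd, p.adj_snd hnil, le_antisymm ?_ ?_⟩
  · have := dist_le p.tail
    have := p.length_tail_add_one hnil
    rw [dist_comm, dist_comm (u := r)]
    omega
  · have := hG.dist_triangle (u := r) (v := p.snd) (w := v)
    rw [dist_comm (u := p.snd), dist_eq_one_iff_adj.mpr (p.adj_snd hnil)] at this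
    exact this

lemma IsTree.length_eq_dist (hG : G.IsTree) {p : G.Walk u v} (hp : p.IsPath) :
    p.length = G.dist u v := by
  obtain ⟨q, hq, hlen⟩ := hG.connected.exists_path_of_dist u v
  rw [(hG.existsUnique_path u v).unique hp hq, hlen]

lemma IsTree.getVert_eq_of_dist_eq_add (hG : G.IsTree) {p : G.Walk r w} (hp : p.IsPath)
    (h : G.dist r w = G.dist r v + G.dist v w) : p.getVert (G.dist r v) = v := by
  obtain ⟨q₁, hq₁⟩ := hG.connected.exists_walk_length_eq_dist r v
  obtain ⟨q₂, hq₂⟩ := hG.connected.exists_walk_length_eq_dist v w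
  have hlen : (q₁.append q₂).length = G.dist r w := by rw [Walk.length_append]; omega
  rw [← (hG.existsUnique_path r w).unique ((q₁.append q₂).isPath_of_length_eq_dist hlen) hp,
    ← hq₁, Walk.getVert_append']
  simp

lemma Walk.IsPath.one_lt_degree_of_mem_support [Fintype (G.neighborSet v)] {p : G.Walk u w}
    (hp : p.IsPath) (hv : v ∈ p.support) (hvu : v ≠ u) (hvw : v ≠ w) : 1 < G.degree v := by
  obtain ⟨k, rfl, hk⟩ := Walk.mem_support_iff_exists_getVert.mp hv
  have hk₀ : k ≠ 0 := by rintro rfl; simp at hvu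
  have hkl : k ≠ p.length := by rintro rfl; simp at hvw
  rw [← card_neighborFinset_eq_degree, one_lt_card]
  refine ⟨p.getVert (k - 1), ?_, p.getVert (k + 1), ?_, fun h => ?_⟩
  · rw [mem_neighborFinset]
    simpa [Nat.sub_add_cancel (Nat.pos_of_ne_zero hk₀)] using
      (p.adj_getVert_succ (i := k - 1) (by omega)).symm
  · exact (mem_neighborFinset _ _ _).mpr (p.adj_getVert_succ (by omega))
  · have := hp.getVert_injOn (by simp only [Set.mem_ofPred_eq]; omega)
      (by simp only [Set.mem_ofPred_eq]; omega) h
    omega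

variable [Fintype V]

/-- In a tree, `w ∈ G.descendants r v` iff `v` lies on the path from `r` to `w`. -/
noncomputable def descendants (G : SimpleGraph V) (r v : V) : Finset V :=
  univ.filter fun w => G.dist r w = G.dist r v + G.dist v w

noncomputable def children (G : SimpleGraph V) [DecidableRel G.Adj] (r v : V) : Finset V :=
  (G.neighborFinset v).filter fun c => G.dist r c = G.dist r v + 1

variable [DecidableRel G.Adj]

lemma IsTree.pairwiseDisjoint_descendants_children (hG : G.IsTree) (r v : V) :
    (G.children r v : Set V).PairwiseDisjoint (G.descendants r) := by
  intro c₁ hc₁ c₂ hc₂ hne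
  simp only [children, coe_filter, Set.mem_ofPred_eq] at hc₁ hc₂
  rw [Function.onFun, Finset.disjoint_left]
  intro w hw₁ hw₂
  simp only [descendants, mem_filter, mem_univ, true_and] at hw₁ hw₂
  obtain ⟨p, hp, -⟩ := hG.connected.exists_path_of_dist r w
  apply hne
  rw [← hG.getVert_eq_of_dist_eq_add hp hw₁, ← hG.getVert_eq_of_dist_eq_add hp hw₂, hc₁.2,
    hc₂.2]

variable [DecidableEq V]

lemma Connected.descendants_eq_insert_biUnion (hG : G.Connected) (r v : V) :
    G.descendants r v = insert v ((G.children r v).biUnion (G.descendants r)) := by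
  ext w
  simp only [descendants, children, mem_insert, mem_biUnion, mem_filter, mem_univ, true_and,
    mem_neighborFinset]
  constructor
  · intro hw
    by_cases hvw : w = v
    · exact .inl hvw
    obtain ⟨p, hp⟩ := hG.exists_walk_length_eq_dist v w
    have hnil : ¬p.Nil := p.not_nil_of_ne (Ne.symm hvw)
    have hadj := p.adj_snd hnil
    have := dist_le p.tail
    have := p.length_tail_add_one hnil
    have := hG.dist_triangle (u := r) (v := v) (w := p.snd)
    have := hG.dist_triangle (u := r) (v := p.snd) (w := w)
    rw [dist_eq_one_iff_adj.mpr hadj] at *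
    exact .inr ⟨p.snd, ⟨hadj, by omega⟩, by omega⟩
  · rintro (rfl | ⟨c, ⟨hadj, hc⟩, hw⟩)
    · simp
    · have := hG.dist_triangle (u := r) (v := v) (w := w)
      have := hG.dist_triangle (u := v) (v := c) (w := w)
      rw [dist_eq_one_iff_adj.mpr hadj] at this
      omega

lemma IsTree.card_children_add_one (hG : G.IsTree) (hv : v ≠ r) :
    #(G.children r v) + 1 = G.degree v := by
  obtain ⟨u, huv, hu⟩ := hG.connected.exists_adj_dist_add_one_eq hv
  obtain ⟨p, hp, -⟩ := hG.connected.exists_path_of_dist r v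
  have hparent : ∀ c, G.Adj v c → G.dist r c + 1 = G.dist r v → p.getVert (G.dist r c) = c :=
    fun c hc hd => hG.getVert_eq_of_dist_eq_add hp (by rw [dist_eq_one_iff_adj.mpr hc.symm]; omega)
  have hnbr : G.neighborFinset v = insert u (G.children r v) := by
    ext c
    simp only [children, mem_insert, mem_filter, mem_neighborFinset]
    constructor
    · intro hc
      rcases hG.dist_eq_dist_add_one_of_adj r hc with hd | hd
      · exact .inl (by rw [← hparent c hc hd.symm, ← hparent u huv hu]; congr 1; omega)
      · exact .inr ⟨hc, hd⟩
    · rintro (rfl | ⟨hc, -⟩) <;> assumption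
  rw [← card_neighborFinset_eq_degree, hnbr, card_insert_of_notMem]
  simp only [children, mem_filter]
  omega

theorem IsTree.sum_descendants_inv_two_pow_dist (hG : G.IsTree)
    (hdeg : ∀ w, G.degree w = 1 ∨ G.degree w = 3) (hv : v ≠ r) :
    ∑ w ∈ G.descendants r v with G.degree w = 1, (2⁻¹ : ℝ) ^ G.dist r w =
      2⁻¹ ^ G.dist r v := by
  induction hN : #(G.descendants r v) using Nat.strong_induction_on generalizing v with
  | _ N ih =>
  have hsplit := hG.connected.descendants_eq_insert_biUnion r v
  have hchild : ∀ c ∈ G.children r v, G.dist r c = G.dist r v + 1 := fun c hc =>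
    (mem_filter.mp hc).2
  rcases hdeg v with hleaf | hinner
  · have : G.children r v = ∅ := by
      rw [← card_eq_zero]; have := hG.card_children_add_one hv; omega
    rw [hsplit, this, biUnion_empty, insert_empty, filter_singleton, if_pos hleaf, sum_singleton]
  · have hcard : #(G.children r v) = 2 := by have := hG.card_children_add_one hv; omega
    have hsum : ∀ c ∈ G.children r v, ∑ w ∈ G.descendants r c with G.degree w = 1,
        (2⁻¹ : ℝ) ^ G.dist r w = 2⁻¹ ^ (G.dist r v + 1) := by
      intro c hc
      rw [← hchild c hc]
      refine ih _ ?_ (fun h => by simpa [h] using hchild c hc) rfl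
      rw [← hN]
      refine card_lt_card ((ssubset_iff_of_subset ?_).mpr ⟨v, ?_, ?_⟩)
      · rw [hsplit]
        exact (subset_biUnion_of_mem _ hc).trans (subset_insert _ _)
      · rw [hsplit]; exact mem_insert_self _ _
      · simp only [descendants, mem_filter, mem_univ, true_and, hchild c hc]
        omega
    rw [hsplit, filter_insert, if_neg (by omega), filter_biUnion,
      sum_biUnion ((hG.pairwiseDisjoint_descendants_children r v).mono fun _ => filter_subset _ _),
      sum_congr rfl hsum, sum_const, hcard, pow_succ]
    ring

lemma Connected.descendants_eq_erase_of_neighborFinset_eq_singleton (hG : G.Connected)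
    (hr : G.neighborFinset r = {v}) :
    G.descendants r v = univ.erase r := by
  have hadj : G.Adj r v := (mem_neighborFinset _ _ _).mp (hr ▸ mem_singleton_self v)
  ext w
  simp only [descendants, mem_filter, mem_univ, true_and, mem_erase, and_true,
    dist_eq_one_iff_adj.mpr hadj]
  constructor
  · rintro hw rfl
    simp only [dist_self] at hw
    omega
  · intro hw
    obtain ⟨p, hp⟩ := hG.exists_walk_length_eq_dist r w
    have hnil : ¬p.Nil := p.not_nil_of_ne (Ne.symm hw)
    have hsnd : p.snd = v :=
      mem_singleton.mp (hr ▸ (mem_neighborFinset _ _ _).mpr (p.adj_snd hnil))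
    have : G.dist v w ≤ p.tail.length := hsnd ▸ dist_le p.tail
    have := p.length_tail_add_one hnil
    have := hG.dist_triangle (u := r) (v := v) (w := w)
    rw [dist_eq_one_iff_adj.mpr hadj] at this
    omega

theorem IsTree.sum_leaves_inv_two_pow_dist (hG : G.IsTree)
    (hdeg : ∀ w, G.degree w = 1 ∨ G.degree w = 3) (hr : G.degree r = 1) :
    ∑ w ∈ univ.erase r with G.degree w = 1, (2⁻¹ : ℝ) ^ G.dist r w = 2⁻¹ := by
  obtain ⟨v, hv⟩ := card_eq_one.mp ((G.card_neighborFinset_eq_degree r).trans hr)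
  have hadj : G.Adj r v := (mem_neighborFinset _ _ _).mp (hv ▸ mem_singleton_self v)
  rw [← hG.connected.descendants_eq_erase_of_neighborFinset_eq_singleton hv,
    hG.sum_descendants_inv_two_pow_dist hdeg hadj.ne', dist_eq_one_iff_adj.mpr hadj, pow_one]

end SimpleGraph

namespace PhyloTree

variable {n : ℕ} (t : PhyloTree n)

lemma degree_eq_one_iff {v : t.V} : t.G.degree v = 1 ↔ ∃ i, t.leaf i = v := by
  refine ⟨fun h => ?_, fun ⟨i, hi⟩ => hi ▸ t.degree_leaf i⟩
  by_contra! hv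
  have := t.degree_internal v hv
  omega

lemma degree_eq_one_or_three (v : t.V) : t.G.degree v = 1 ∨ t.G.degree v = 3 := by
  by_cases hv : ∃ i, t.leaf i = v
  · exact .inl ((t.degree_eq_one_iff).mpr hv)
  · push Not at hv
    exact .inr (t.degree_internal v hv)

lemma map_leaf_filter_ne (x : Fin n) :
    (univ.filter (· ≠ x)).map t.leaf = (univ.erase (t.leaf x)).filter (t.G.degree · = 1) := by
  ext v
  simp only [mem_map, mem_filter, mem_univ, true_and, and_true, mem_erase, degree_eq_one_iff]
  constructor
  · rintro ⟨y, hyx, rfl⟩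
    exact ⟨fun h => hyx (t.leaf.injective h), y, rfl⟩
  · rintro ⟨hvx, y, rfl⟩
    exact ⟨y, fun h => hvx (h ▸ rfl), rfl⟩

lemma internalCount_eq_dist_sub_one {x y : Fin n} (hyx : y ≠ x) :
    t.internalCount x y = t.G.dist (t.leaf x) (t.leaf y) - 1 := by
  obtain ⟨hp, -⟩ := (t.isTree.existsUnique_path (t.leaf x) (t.leaf y)).choose_spec
  set p := (t.isTree.existsUnique_path (t.leaf x) (t.leaf y)).choose
  have hne : t.leaf y ≠ t.leaf x := t.leaf.injective.ne hyx
  have hnot_leaf_iff :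
      ∀ v ∈ p.support, (∀ i, t.leaf i ≠ v) ↔ v ≠ t.leaf x ∧ v ≠ t.leaf y := by
    intro v hv
    refine ⟨fun h => ⟨(h x).symm, (h y).symm⟩, fun ⟨hvx, hvy⟩ i hi => ?_⟩
    have := hp.one_lt_degree_of_mem_support hv hvx hvy
    rw [← hi, t.degree_leaf] at this
    omega
  have hfilter : p.support.filter (fun v => ∀ i, t.leaf i ≠ v) =
      (p.support.erase (t.leaf x)).erase (t.leaf y) := by
    rw [(hp.support_nodup.erase _).erase_eq_filter, hp.support_nodup.erase_eq_filter,
      List.filter_filter]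
    refine List.filter_congr fun v hv => ?_
    simp only [hnot_leaf_iff v hv]
    grind
  rw [internalCount, hfilter,
    List.length_erase_of_mem ((List.mem_erase_of_ne hne).mpr p.end_mem_support),
    List.length_erase_of_mem p.start_mem_support, SimpleGraph.Walk.length_support,
    t.isTree.length_eq_dist hp]
  omega

end PhyloTree

theorem pauplin_coeff_sum_eq_one_general (n : ℕ) (t : PhyloTree n) (x : Fin n) :
    ∑ y ∈ Finset.univ.filter (· ≠ x), ((2 : ℝ))⁻¹ ^ t.internalCount x y = 1 := by
  have hkraft := t.isTree.sum_leaves_inv_two_pow_dist t.degree_eq_one_or_three (t.degree_leaf x)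
  rw [← t.map_leaf_filter_ne x, sum_map] at hkraft
  calc ∑ y ∈ univ.filter (· ≠ x), (2⁻¹ : ℝ) ^ t.internalCount x y
      = ∑ y ∈ univ.filter (· ≠ x), 2 * 2⁻¹ ^ t.G.dist (t.leaf x) (t.leaf y) := by
        refine sum_congr rfl fun y hy => ?_
        have hyx : y ≠ x := (mem_filter.mp hy).2
        obtain ⟨d, hd⟩ := Nat.exists_eq_add_one_of_ne_zero
          (t.isTree.connected.pos_dist_of_ne (t.leaf.injective.ne hyx.symm)).ne'
        rw [t.internalCount_eq_dist_sub_one hyx, hd, Nat.add_sub_cancel, pow_succ]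
        ring
    _ = 1 := by rw [← mul_sum, hkraft]; norm_num

/-- Pauplin's normalization: for every leaf `x` of a binary tree on `n ≥ 3` leaves,
the coefficients `c_{xy} = 2^{-l(x,y)}` sum to `1` over all other leaves `y`. -/
theorem pauplin_coeff_sum_eq_one (n : ℕ) (hn : 3 ≤ n) (t : PhyloTree n) (x : Fin n) :
    ∑ y ∈ Finset.univ.filter (· ≠ x), ((2 : ℝ))⁻¹ ^ t.internalCount x y = 1 :=
  pauplin_coeff_sum_eq_one_general n t x
end

section
/- For n = 4 leaves, the matrix A^(4) (with diagonal entries 0 and entries −1 for distinct pairs sharing a leaf) applied to a tree metric d of the quartet tree 12|34 with interior edge length w > 0 yields a Q-criterion vector in which q_{12} = q_{34} < q_{xy} for all other pairs {x,y}, so NJ picks a correct cherry. -/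
/-!
For distinct leaves `x, y` the Q-criterion is minus the total distance between `{x, y}` and the
remaining leaves. With four leaves this is `q_{xy} = d_{xy} + d_{x'y'} - Σ d`, where `{x', y'}` is
the complementary pair, so `q` is smallest on the split minimizing `d_{xy} + d_{x'y'}`; on the
quartet tree `12|34` the true split beats the other two by `2w`.
-/

open Finset

def qCriterion {ι : Type*} [Fintype ι] (d : ι → ι → ℝ) (x y : ι) : ℝ :=
  2 * d x y - ∑ z, d x z - ∑ z, d z y

section

variable {ι : Type*} [Fintype ι] [DecidableEq ι] {d : ι → ι → ℝ}

theorem qCriterion_eq_neg_sum_compl (hsymm : ∀ x y, d x y = d y x) (hdiag : ∀ x, d x x = 0)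
    {x y : ι} (hxy : x ≠ y) :
    qCriterion d x y = -∑ z ∈ {x, y}ᶜ, (d x z + d y z) := by
  have split (f : ι → ℝ) : ∑ z, f z = f x + f y + ∑ z ∈ {x, y}ᶜ, f z := by
    rw [← sum_add_sum_compl {x, y} f, sum_pair hxy]
  simp only [qCriterion, split, hdiag, sum_add_distrib, hsymm _ y]
  ring

theorem qCriterion_of_compl_eq_pair (hsymm : ∀ x y, d x y = d y x) (hdiag : ∀ x, d x x = 0)
    {x y x' y' : ι} (hxy : x ≠ y) (hxy' : x' ≠ y') (hcompl : ({x, y}ᶜ : Finset ι) = {x', y'}) :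
    qCriterion d x y = -(d x x' + d y x' + d x y' + d y y') := by
  rw [qCriterion_eq_neg_sum_compl hsymm hdiag hxy, hcompl, sum_pair hxy']
  ring

end

theorem nj_quartet_picks_cherry_general
    (e1 e2 e3 e4 w : ℝ)
    (hw : 0 < w)
    (d : Fin 4 → Fin 4 → ℝ) (hsymm : ∀ x y, d x y = d y x) (hdiag : ∀ x, d x x = 0)
    (h01 : d 0 1 = e1 + e2) (h23 : d 2 3 = e3 + e4)
    (h02 : d 0 2 = e1 + e3 + w) (h13 : d 1 3 = e2 + e4 + w)
    (h03 : d 0 3 = e1 + e4 + w) (h12 : d 1 2 = e2 + e3 + w)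
    (q : Fin 4 → Fin 4 → ℝ)
    (hq : ∀ x y, q x y = 2 * d x y - (∑ z, d x z) - ∑ z, d z y) :
    q 0 1 = q 2 3 ∧ q 0 1 < q 0 2 ∧ q 0 1 < q 0 3 ∧ q 0 1 < q 1 2 ∧ q 0 1 < q 1 3 := by
  have hq' (x y x' y' : Fin 4) (hxy : x ≠ y) (hxy' : x' ≠ y')
      (hcompl : ({x, y}ᶜ : Finset (Fin 4)) = {x', y'}) :
      q x y = -(d x x' + d y x' + d x y' + d y y') :=
    (hq x y).trans (qCriterion_of_compl_eq_pair hsymm hdiag hxy hxy' hcompl)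
  rw [hq' 0 1 2 3 (by decide) (by decide) (by decide),
    hq' 2 3 0 1 (by decide) (by decide) (by decide),
    hq' 0 2 1 3 (by decide) (by decide) (by decide),
    hq' 0 3 1 2 (by decide) (by decide) (by decide),
    hq' 1 2 0 3 (by decide) (by decide) (by decide),
    hq' 1 3 0 2 (by decide) (by decide) (by decide),
    hsymm 2 0, hsymm 3 0, hsymm 2 1, hsymm 3 1, hsymm 1 0, hsymm 3 2]
  refine ⟨by linarith, by linarith, by linarith, by linarith, by linarith⟩

/-- For the quartet tree `12|34` (leaves `0,1,2,3` with cherries `{0,1}`, `{2,3}`,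
pendant lengths `e1,...,e4 ≥ 0`, interior length `w > 0`) the NJ Q-criterion
`q_{xy} = 2 d_{xy} - Σ_z d_{xz} - Σ_z d_{zy}` satisfies
`q_{12} = q_{34} < q_{xy}` for all other pairs, so NJ picks a correct cherry. -/
theorem nj_quartet_picks_cherry
    (e1 e2 e3 e4 w : ℝ) (he1 : 0 ≤ e1) (he2 : 0 ≤ e2) (he3 : 0 ≤ e3) (he4 : 0 ≤ e4)
    (hw : 0 < w)
    (d : Fin 4 → Fin 4 → ℝ) (hsymm : ∀ x y, d x y = d y x) (hdiag : ∀ x, d x x = 0)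
    (h01 : d 0 1 = e1 + e2) (h23 : d 2 3 = e3 + e4)
    (h02 : d 0 2 = e1 + e3 + w) (h13 : d 1 3 = e2 + e4 + w)
    (h03 : d 0 3 = e1 + e4 + w) (h12 : d 1 2 = e2 + e3 + w)
    (q : Fin 4 → Fin 4 → ℝ)
    (hq : ∀ x y, q x y = 2 * d x y - (∑ z, d x z) - ∑ z, d z y) :
    q 0 1 = q 2 3 ∧ q 0 1 < q 0 2 ∧ q 0 1 < q 0 3 ∧ q 0 1 < q 1 2 ∧ q 0 1 < q 1 3 :=
  nj_quartet_picks_cherry_general e1 e2 e3 e4 w hw d hsymm hdiag h01 h23 h02 h13 h03 h12 q hq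
end
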